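/- arXiv:quant-ph/9512032 — 9 statements merged into one kernel-verified Lean document; each statement's English description precedes it below -/
import Mathlib

section
/- Let C be a linear code of length n over F_2 and let E, e ∈ F_2^n with supp(e) ⊆ supp(E) and wt(E) < d(C^⊥). Then there exists a codeword v ∈ C such that the restriction of v to supp(E) equals e, i.e., v agrees with e on every coordinate in supp(E). -/
open Finset

/-- The dual code `C^⊥ = {v : ∀ c ∈ C, v·c = 0}`. -/
def dualCode {n : ℕ} (C : Submodule (ZMod 2) (Fin n → ZMod 2)) :
    Submodule (ZMod 2) (Fin n → ZMod 2) where
  carrier := {v | ∀ c ∈ C, ∑ i, v i * c i = 0}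
  add_mem' := by
    intro a b ha hb c hc
    simp only [Set.mem_setOf_eq] at *
    simp [Pi.add_apply, add_mul, Finset.sum_add_distrib, ha c hc, hb c hc]
  zero_mem' := by simp
  smul_mem' := by
    intro m a ha c hc
    simp only [Set.mem_setOf_eq] at *
    simp [Pi.smul_apply, smul_eq_mul, mul_assoc, ← Finset.mul_sum, ha c hc]

/-- If `supp e ⊆ supp E` and `wt E < d(C^⊥)`, then some codeword `v ∈ C`
agrees with `e` on `supp E`. -/
theorem exists_codeword_restricting_to
    {n : ℕ} (C : Submodule (ZMod 2) (Fin n → ZMod 2))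
    (E e : Fin n → ZMod 2)
    (hsupp : ∀ i, e i ≠ 0 → E i ≠ 0)
    (hd : ∀ v ∈ dualCode C, v ≠ 0 → hammingNorm E < hammingNorm v) :
    ∃ v ∈ C, ∀ i, E i ≠ 0 → v i = e i := by
  set U : Submodule (ZMod 2) (Fin n → ZMod 2) :=
    { carrier := {w | ∀ i, E i ≠ 0 → w i = 0}
      add_mem' := by intro a b ha hb i hi; simp [Pi.add_apply, ha i hi, hb i hi]
      zero_mem' := by intro i hi; rfl
      smul_mem' := by intro m a ha i hi; simp [Pi.smul_apply, ha i hi] } with hU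
  have he : e ∈ C ⊔ U := by
    by_contra hx
    obtain ⟨f, hfe, hf⟩ := (C ⊔ U).exists_dual_map_eq_bot_of_notMem hx inferInstance
    set w : Fin n → ZMod 2 := fun i => f (fun j => if i = j then 1 else 0) with hw
    have hfw : ∀ x, f x = ∑ i, w i * x i := by
      intro x
      rw [LinearMap.pi_apply_eq_sum_univ]
      exact Finset.sum_congr rfl fun i _ => by rw [smul_eq_mul, mul_comm]
    have hzero : ∀ x ∈ C ⊔ U, f x = 0 := by
      intro x hx'
      have : f x ∈ (C ⊔ U).map f := ⟨x, hx', rfl⟩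
      rwa [hf, Submodule.mem_bot] at this
    have hwsupp : ∀ i, w i ≠ 0 → E i ≠ 0 := by
      intro i hwi
      by_contra hEi
      apply hwi
      have hmem : (fun j => if i = j then (1 : ZMod 2) else 0) ∈ U := by
        intro j hj
        have : i ≠ j := fun h => hj (h ▸ hEi)
        simp [this]
      exact hzero _ (Submodule.mem_sup_right hmem)
    have hwC : w ∈ dualCode C := by
      intro c hc
      rw [← hfw c]
      exact hzero c (Submodule.mem_sup_left hc)
    have hwne : w ≠ 0 := by
      intro h
      apply hfe
      rw [hfw e, h]
      simp
    have hlt := hd w hwC hwne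
    have hle : hammingNorm w ≤ hammingNorm E := by
      apply Finset.card_le_card
      intro i hi
      simp only [Finset.mem_filter, Finset.mem_univ, true_and] at *
      exact hwsupp i hi
    omega
  obtain ⟨c, hc, u, hu, hcu⟩ := Submodule.mem_sup.mp he
  refine ⟨c, hc, fun i hi => ?_⟩
  have hui : u i = 0 := hu i hi
  have : c i + u i = e i := congrFun hcu i
  rw [hui, add_zero] at this
  exact this
end

section
/- Let C be a linear code of length n over F_2 and let E, e ∈ F_2^n with supp(e) ⊆ supp(E) and wt(E) < d(C^⊥). Then the number of codewords v ∈ C whose restriction to supp(E) equals e is exactly 2^(dim(C) − wt(E)). -/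
open Finset

/-- If `supp e ⊆ supp E` and `wt E < d(C^⊥)`, then the number of codewords
`v ∈ C` agreeing with `e` on `supp E` is exactly `2 ^ (dim C - wt E)`. -/
theorem card_codewords_restricting_to
    {n : ℕ} (C : Submodule (ZMod 2) (Fin n → ZMod 2))
    (E e : Fin n → ZMod 2)
    (hsupp : ∀ i, e i ≠ 0 → E i ≠ 0)
    (hd : ∀ v ∈ dualCode C, v ≠ 0 → hammingNorm E < hammingNorm v) :
    Nat.card {v : Fin n → ZMod 2 // v ∈ C ∧ ∀ i, E i ≠ 0 → v i = e i}
      = 2 ^ (Module.finrank (ZMod 2) C - hammingNorm E) := by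
  classical
  set κ := {i : Fin n // E i ≠ 0} with hκ
  let f : (Fin n → ZMod 2) →ₗ[ZMod 2] (κ → ZMod 2) :=
    LinearMap.funLeft (ZMod 2) (ZMod 2) Subtype.val
  let g : C →ₗ[ZMod 2] (κ → ZMod 2) := f.comp C.subtype
  have hgapp : ∀ (x : C) (j : κ), g x j = (x : Fin n → ZMod 2) j.1 := fun x j => rfl
  have hcardκ : Fintype.card κ = hammingNorm E := by
    rw [hammingNorm]
    exact Fintype.card_subtype _
  -- decompose linear functionals on κ → ZMod 2
  have hφx : ∀ (φ : Module.Dual (ZMod 2) (κ → ZMod 2)) (x : κ → ZMod 2),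
      φ x = ∑ j, x j * φ (Pi.single j 1) := by
    intro φ x
    conv_lhs => rw [← Finset.univ_sum_single x]
    rw [map_sum]
    refine Finset.sum_congr rfl fun j _ => ?_
    have h1 : (Pi.single j (x j) : κ → ZMod 2)
        = x j • (Pi.single j (1 : ZMod 2) : κ → ZMod 2) := by
      funext k
      simp [Pi.single_apply, Pi.smul_apply, smul_eq_mul, mul_ite]
    rw [h1, map_smul, smul_eq_mul]
  -- surjectivity of g
  have hsurj : LinearMap.range g = ⊤ := by
    by_contra hne
    obtain ⟨φ, hφ0, hφ⟩ := Submodule.exists_dual_map_eq_bot_of_lt_top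
      (lt_top_iff_ne_top.mpr hne) inferInstance
    set w : Fin n → ZMod 2 :=
      fun i => if h : E i ≠ 0 then φ (Pi.single ⟨i, h⟩ 1) else 0 with hw
    have hwsupp : ∀ i, w i ≠ 0 → E i ≠ 0 := by
      intro i hwi
      by_contra hEi
      exact hwi (dif_neg (not_not_intro hEi))
    have hwmem : w ∈ dualCode C := by
      intro c hc
      have h0 : φ (g ⟨c, hc⟩) = 0 := by
        have : φ (g ⟨c, hc⟩) ∈ (LinearMap.range g).map φ :=
          Submodule.mem_map_of_mem (LinearMap.mem_range_self g _)
        rwa [hφ, Submodule.mem_bot] at this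
      rw [hφx φ] at h0
      rw [← h0]
      rw [← Finset.sum_filter_of_ne (p := fun i => E i ≠ 0)
        (fun i _ hne => hwsupp i (fun h => hne (by rw [h, zero_mul])))]
      have hsub : ∑ i ∈ Finset.univ.filter (fun i => E i ≠ 0), w i * c i
          = ∑ j : κ, w j.1 * c j.1 :=
        Finset.sum_subtype _ (fun i => by simp) _
      rw [hsub]
      refine Finset.sum_congr rfl fun j _ => ?_
      have hwj : w j.1 = φ (Pi.single j 1) := by
        simp only [hw, dif_pos j.2]
        rfl
      rw [hwj, hgapp, mul_comm]
    have hwne : w ≠ 0 := by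
      intro h0
      apply hφ0
      apply LinearMap.ext
      intro x
      show φ x = 0
      rw [hφx φ x]
      refine Finset.sum_eq_zero fun j _ => ?_
      have hwj : w j.1 = φ (Pi.single j 1) := by
        simp only [hw, dif_pos j.2]
        rfl
      rw [← hwj, h0, Pi.zero_apply, mul_zero]
    have hle : hammingNorm w ≤ hammingNorm E := by
      refine Finset.card_le_card fun i hi => ?_
      simp only [Finset.mem_filter, Finset.mem_univ, true_and] at *
      exact hwsupp i hi
    exact absurd (hd w hwmem hwne) (not_lt.mpr hle)
  -- pick a preimage of e restricted to supp E
  obtain ⟨v0, hv0⟩ : ∃ v0 : C, g v0 = fun j : κ => e j.1 := by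
    have := hsurj ▸ Submodule.mem_top (R := ZMod 2)
      (x := (fun j : κ => e j.1 : κ → ZMod 2))
    exact this
  -- the fiber is in bijection with ker g
  have hequiv : {v : Fin n → ZMod 2 // v ∈ C ∧ ∀ i, E i ≠ 0 → v i = e i} ≃
      LinearMap.ker g := by
    refine ⟨fun v => ⟨⟨v.1, v.2.1⟩ - v0, ?_⟩, fun u => ⟨(u.1 + v0 : C).1, (u.1 + v0).2, ?_⟩,
      ?_, ?_⟩
    · rw [LinearMap.mem_ker, map_sub, hv0]
      ext j
      simp only [Pi.sub_apply, hgapp, Pi.zero_apply]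
      rw [v.2.2 j.1 j.2, sub_self]
    · intro i hi
      have hker := u.2
      rw [LinearMap.mem_ker] at hker
      have h1 : g u.1 ⟨i, hi⟩ = 0 := by rw [hker]; rfl
      have h2 : g v0 ⟨i, hi⟩ = e i := by rw [hv0]
      rw [hgapp] at h1
      rw [hgapp] at h2
      show (u.1 : Fin n → ZMod 2) i + (v0 : Fin n → ZMod 2) i = e i
      rw [h1, h2, zero_add]
    · intro v
      apply Subtype.ext
      funext i
      show ((⟨v.1, v.2.1⟩ - v0 + v0 : C) : Fin n → ZMod 2) i = v.1 i
      simp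
    · intro u
      apply Subtype.ext
      apply Subtype.ext
      funext i
      show ((u.1 + v0 : C) : Fin n → ZMod 2) i - (v0 : Fin n → ZMod 2) i
          = (u.1 : Fin n → ZMod 2) i
      simp
  rw [Nat.card_congr hequiv]
  -- cardinality of the kernel
  have hfin : Module.Finite (ZMod 2) C := Module.Finite.of_injective C.subtype
    Subtype.val_injective
  have hrank : Module.finrank (ZMod 2) (LinearMap.ker g)
      = Module.finrank (ZMod 2) C - hammingNorm E := by
    have hrn := LinearMap.finrank_range_add_finrank_ker g
    rw [hsurj, finrank_top, Module.finrank_fintype_fun_eq_card, hcardκ] at hrn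
    omega
  letI : Fintype (LinearMap.ker g) := Fintype.ofFinite _
  have hcard : Nat.card (LinearMap.ker g)
      = Fintype.card (ZMod 2) ^ Module.finrank (ZMod 2) (LinearMap.ker g) := by
    rw [Nat.card_eq_fintype_card]
    exact Module.card_eq_pow_finrank
  rw [hcard, ZMod.card, hrank]
end

section
/- Let C₁ be a linear code of length n over F_2 and let E, e, w₁, w₂ ∈ F_2^n with supp(e) ⊆ supp(E) and wt(E) < d(C₁^⊥). Then the sum Σ over {x ∈ C₁ : x agrees with e on supp(E)} of (−1)^(x·(w₁+w₂)) equals (−1)^(e·(c+w₁+w₂)) · 2^(dim(C₁) − wt(E)) if there exists c ∈ C₁^⊥ such that supp(c + w₁ + w₂) ⊆ supp(E), and equals 0 otherwise. -/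
open Finset
open scoped Classical

/-- `(-1)^b` for `b ∈ F₂`, as an integer. -/
def signZ (b : ZMod 2) : ℤ := if b = 0 then 1 else -1

lemma mem_dualCode {n : ℕ} {C : Submodule (ZMod 2) (Fin n → ZMod 2)}
    {v : Fin n → ZMod 2} : v ∈ dualCode C ↔ ∀ c ∈ C, ∑ i, v i * c i = 0 := Iff.rfl

lemma signZ_add (a b : ZMod 2) : signZ (a + b) = signZ a * signZ b := by
  revert a b; decide

lemma zmod2_add_self (a : ZMod 2) : a + a = 0 := by revert a; decide

lemma zmod2_eq_of_add_eq_zero {a b : ZMod 2} (h : a + b = 0) : a = b := by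
  revert a b; decide

/-- projection onto the support of `E` -/
def projE {n : ℕ} (E : Fin n → ZMod 2) :
    (Fin n → ZMod 2) →ₗ[ZMod 2] (Fin n → ZMod 2) where
  toFun v := fun i => if E i = 0 then 0 else v i
  map_add' a b := by funext i; by_cases h : E i = 0 <;> simp [h]
  map_smul' m a := by funext i; by_cases h : E i = 0 <;> simp [h]

lemma projE_apply {n : ℕ} (E v : Fin n → ZMod 2) (i : Fin n) :
    projE E v i = if E i = 0 then 0 else v i := rfl

lemma mem_range_projE {n : ℕ} {E v : Fin n → ZMod 2} :
    v ∈ LinearMap.range (projE E) ↔ ∀ i, E i = 0 → v i = 0 := by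
  constructor
  · rintro ⟨u, rfl⟩ i hi; simp [projE_apply, hi]
  · intro h
    exact ⟨v, by funext i; by_cases hi : E i = 0 <;> simp [projE_apply, hi, h i]⟩

/-- Every linear functional is given by dot product with the vector of its values
on the standard basis. -/
lemma funct_eq_sum {n : ℕ} (f : (Fin n → ZMod 2) →ₗ[ZMod 2] ZMod 2)
    (x : Fin n → ZMod 2) : f x = ∑ i, x i * f (Pi.single i 1) := by
  conv_lhs => rw [← Finset.univ_sum_single x]
  rw [map_sum]
  refine Finset.sum_congr rfl fun i _ => ?_
  have : Pi.single i (x i) = (x i • Pi.single i 1 : Fin n → ZMod 2) := by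
    rw [← Pi.single_smul, smul_eq_mul, mul_one]
  rw [this, map_smul, smul_eq_mul]

lemma map_projE_eq {n : ℕ} (C₁ : Submodule (ZMod 2) (Fin n → ZMod 2))
    (E : Fin n → ZMod 2)
    (hd : ∀ v ∈ dualCode C₁, v ≠ 0 → hammingNorm E < hammingNorm v) :
    Submodule.map (projE E) C₁ = LinearMap.range (projE E) := by
  refine le_antisymm ?_ ?_
  · rintro v ⟨x, hx, rfl⟩; exact ⟨x, rfl⟩
  intro v hv
  by_contra hnv
  obtain ⟨f, hfv, hfmap⟩ := Submodule.exists_dual_map_eq_bot_of_notMem hnv inferInstance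
  have hf0 : ∀ x ∈ C₁, f (projE E x) = 0 := by
    intro x hx
    have h1 : projE E x ∈ Submodule.map (projE E) C₁ := ⟨x, hx, rfl⟩
    have h2 : f (projE E x) ∈ (Submodule.map (projE E) C₁).map f :=
      Submodule.mem_map_of_mem h1
    rw [hfmap] at h2
    exact (Submodule.mem_bot (ZMod 2)).1 h2
  set u : Fin n → ZMod 2 := fun i => f (Pi.single i 1) with hu
  set d := projE E u with hdd
  have hdmem : d ∈ dualCode C₁ := by
    intro x hx
    have h1 : ∑ i, d i * x i = ∑ i, (projE E x) i * u i := by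
      refine Finset.sum_congr rfl fun i _ => ?_
      by_cases hi : E i = 0 <;> simp [hdd, projE_apply, hi, mul_comm]
    rw [h1, ← funct_eq_sum f (projE E x), hf0 x hx]
  have hdne : d ≠ 0 := by
    intro h0
    apply hfv
    rw [funct_eq_sum f v]
    refine Finset.sum_eq_zero fun i _ => ?_
    by_cases hi : E i = 0
    · rw [mem_range_projE.1 hv i hi, zero_mul]
    · have h3 : d i = 0 := by rw [h0]; rfl
      have hui : f (Pi.single i 1) = 0 := by simpa [hdd, projE_apply, hi, hu] using h3
      rw [hui, mul_zero]
  have hle : hammingNorm d ≤ hammingNorm E := by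
    unfold hammingNorm
    apply Finset.card_le_card
    intro i hi
    simp only [Finset.mem_filter, Finset.mem_univ, true_and] at hi ⊢
    intro hEi
    exact hi (by simp [hdd, projE_apply, hEi])
  exact absurd hle (not_le.2 (hd d hdmem hdne))

lemma exists_codeword_agreeing {n : ℕ} (C₁ : Submodule (ZMod 2) (Fin n → ZMod 2))
    (E e : Fin n → ZMod 2)
    (hd : ∀ v ∈ dualCode C₁, v ≠ 0 → hammingNorm E < hammingNorm v) :
    ∃ x₀, x₀ ∈ C₁ ∧ ∀ i, E i ≠ 0 → x₀ i = e i := by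
  have h : projE E e ∈ Submodule.map (projE E) C₁ := by
    rw [map_projE_eq C₁ E hd]; exact ⟨e, rfl⟩
  obtain ⟨x₀, hx₀, hproj⟩ := h
  refine ⟨x₀, hx₀, fun i hi => ?_⟩
  have h2 := congrFun hproj i
  simpa [projE_apply, hi] using h2

def dotW {n : ℕ} (w : Fin n → ZMod 2) : (Fin n → ZMod 2) →ₗ[ZMod 2] ZMod 2 where
  toFun x := ∑ i, x i * w i
  map_add' a b := by simp [add_mul, Finset.sum_add_distrib]
  map_smul' m a := by simp [smul_eq_mul, mul_assoc, Finset.mul_sum]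

lemma exists_dual_shift {n : ℕ} (C₁ : Submodule (ZMod 2) (Fin n → ZMod 2))
    (E w : Fin n → ZMod 2)
    (h : ∀ y ∈ C₁, (∀ i, E i ≠ 0 → y i = 0) → ∑ i, y i * w i = 0) :
    ∃ c ∈ dualCode C₁, ∀ i, (c + w) i ≠ 0 → E i ≠ 0 := by
  classical
  set ψ : C₁ →ₗ[ZMod 2] (Fin n → ZMod 2) := (projE E) ∘ₗ C₁.subtype with hψ
  set φ : C₁ →ₗ[ZMod 2] ZMod 2 := (dotW w) ∘ₗ C₁.subtype with hφ
  obtain ⟨σ, hσ⟩ := ψ.rangeRestrict.exists_rightInverse_of_surjective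
    (LinearMap.range_eq_top.2 ψ.surjective_rangeRestrict)
  obtain ⟨g, hg⟩ := LinearMap.exists_extend (φ ∘ₗ σ)
  set u : Fin n → ZMod 2 := fun i => g (Pi.single i 1) with hu
  set s := projE E u with hs
  have key : ∀ x, x ∈ C₁ → ∑ i, s i * x i = ∑ i, x i * w i := by
    intro x hx
    have h1 : ∑ i, s i * x i = ∑ i, (projE E x) i * u i := by
      refine Finset.sum_congr rfl fun i _ => ?_
      by_cases hi : E i = 0 <;> simp [hs, projE_apply, hi, mul_comm]
    have h2 : ∑ i, (projE E x) i * u i = g (projE E x) := (funct_eq_sum g (projE E x)).symm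
    set v : ↥(LinearMap.range ψ) := ψ.rangeRestrict ⟨x, hx⟩ with hv
    have h3 : g (projE E x) = φ (σ v) := by
      have h4 : projE E x = (LinearMap.range ψ).subtype v := rfl
      rw [h4, ← LinearMap.comp_apply, hg, LinearMap.comp_apply]
    set z : ↥C₁ := σ v with hz
    have hzv : ψ z = ψ ⟨x, hx⟩ := by
      have h5 : ψ.rangeRestrict z = v := by
        rw [hz, ← LinearMap.comp_apply, hσ, LinearMap.id_apply]
      have h6 := congrArg (fun t => ((LinearMap.range ψ).subtype t)) h5
      simpa [hv] using h6
    have hmem : (z : Fin n → ZMod 2) + x ∈ C₁ := C₁.add_mem z.2 hx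
    have hker : ∀ i, E i ≠ 0 → ((z : Fin n → ZMod 2) + x) i = 0 := by
      intro i hi
      have h7 : projE E ((z : Fin n → ZMod 2) + x) = 0 := by
        have : projE E ((z : Fin n → ZMod 2) + x) = ψ z + ψ ⟨x, hx⟩ := by
          rw [map_add]; rfl
        rw [this, hzv]
        funext j
        exact zmod2_add_self _
      have h8 := congrFun h7 i
      simpa [projE_apply, hi] using h8
    have h4 := h _ hmem hker
    have h5 : ∑ i, (z : Fin n → ZMod 2) i * w i + ∑ i, x i * w i = 0 := by
      rw [← h4]
      simp [Pi.add_apply, add_mul, Finset.sum_add_distrib]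
    have h6 : φ (σ v) = ∑ i, x i * w i := zmod2_eq_of_add_eq_zero h5
    rw [h1, h2, h3, h6]
  refine ⟨w + s, ?_, ?_⟩
  · intro x hx
    have h1 : ∑ i, (w + s) i * x i = ∑ i, x i * w i + ∑ i, s i * x i := by
      rw [← Finset.sum_add_distrib]
      refine Finset.sum_congr rfl fun i _ => ?_
      simp only [Pi.add_apply]; ring
    rw [h1, key x hx, zmod2_add_self]
  · intro i hi
    by_contra hE'
    apply hi
    have hsi : s i = 0 := by simp [hs, projE_apply, hE']
    simp [Pi.add_apply, hsi, zmod2_add_self]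

lemma card_range_projE {n : ℕ} (E : Fin n → ZMod 2) :
    Nat.card ↥(LinearMap.range (projE E)) = 2 ^ hammingNorm E := by
  classical
  rw [Nat.card_eq_fintype_card]
  have equiv : ↥(LinearMap.range (projE E)) ≃ ({i : Fin n // E i ≠ 0} → ZMod 2) :=
    { toFun := fun v j => v.1 j.1
      invFun := fun u => ⟨fun i => if h : E i ≠ 0 then u ⟨i, h⟩ else 0,
        mem_range_projE.2 (fun i hi => by simp [hi])⟩
      left_inv := fun v => Subtype.ext (funext fun i => by
        by_cases h : E i ≠ 0
        · simp [h]
        · simp only [h, dif_neg, not_imp_self]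
          rw [not_not] at h
          exact (mem_range_projE.1 v.2 i h).symm)
      right_inv := fun u => funext fun j => by simp [j.2] }
  rw [Fintype.card_congr equiv, Fintype.card_fun, ZMod.card]
  congr 1
  rw [Fintype.card_subtype]
  unfold hammingNorm
  congr 1

set_option maxHeartbeats 1000000 in
set_option synthInstance.maxHeartbeats 400000 in
lemma card_agree_zero {n : ℕ} (C₁ : Submodule (ZMod 2) (Fin n → ZMod 2))
    (E : Fin n → ZMod 2)
    (hd : ∀ v ∈ dualCode C₁, v ≠ 0 → hammingNorm E < hammingNorm v) :
    (Finset.univ.filter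
      (fun y : Fin n → ZMod 2 => y ∈ C₁ ∧ ∀ i, E i ≠ 0 → y i = 0)).card
      = 2 ^ (Module.finrank (ZMod 2) C₁ - hammingNorm E) := by
  classical
  set ψ : C₁ →ₗ[ZMod 2] (Fin n → ZMod 2) := (projE E) ∘ₗ C₁.subtype with hψ
  haveI : Fintype ↥(LinearMap.ker ψ) := Fintype.ofFinite _
  haveI : Fintype ↥(LinearMap.range (projE E)) := Fintype.ofFinite _
  have e0 : ∀ y : Fin n → ZMod 2, (∀ i, E i ≠ 0 → y i = 0) ↔ projE E y = 0 := by
    intro y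
    constructor
    · intro hy; funext i; by_cases hi : E i = 0 <;> simp [projE_apply, hi, hy i]
    · intro hy i hi
      have := congrFun hy i
      simpa [projE_apply, hi] using this
  have equiv : {y : Fin n → ZMod 2 // y ∈ C₁ ∧ ∀ i, E i ≠ 0 → y i = 0} ≃
      ↥(LinearMap.ker ψ) :=
    { toFun := fun y => ⟨⟨y.1, y.2.1⟩, (e0 y.1).1 y.2.2⟩
      invFun := fun z => ⟨z.1.1, z.1.2, (e0 z.1.1).2 z.2⟩
      left_inv := fun y => rfl
      right_inv := fun z => rfl }
  have e1 : (Finset.univ.filter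
      (fun y : Fin n → ZMod 2 => y ∈ C₁ ∧ ∀ i, E i ≠ 0 → y i = 0)).card
      = Fintype.card ↥(LinearMap.ker ψ) := by
    rw [← Fintype.card_congr equiv, Fintype.card_subtype]
  have e2 : Fintype.card ↥(LinearMap.ker ψ) =
      2 ^ Module.finrank (ZMod 2) ↥(LinearMap.ker ψ) := by
    have := Module.card_eq_pow_finrank (K := ZMod 2) (V := ↥(LinearMap.ker ψ))
    simpa [ZMod.card] using this
  have e3 := LinearMap.finrank_range_add_finrank_ker ψ
  have e4 : LinearMap.range ψ = LinearMap.range (projE E) := by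
    rw [hψ, LinearMap.range_comp, Submodule.range_subtype, map_projE_eq C₁ E hd]
  have e5 : Module.finrank (ZMod 2) ↥(LinearMap.range (projE E)) = hammingNorm E := by
    have h1 := Module.card_eq_pow_finrank (K := ZMod 2) (V := ↥(LinearMap.range (projE E)))
    rw [← Nat.card_eq_fintype_card, card_range_projE E, ZMod.card] at h1
    exact (Nat.pow_right_injective (le_refl 2) h1.symm)
  rw [e4, e5] at e3
  have e6 : Module.finrank (ZMod 2) ↥(LinearMap.ker ψ)
      = Module.finrank (ZMod 2) ↥C₁ - hammingNorm E :=
    eq_tsub_of_add_eq ((add_comm _ _).trans e3)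
  rw [e1, e2, e6]

lemma zmod2_one_of_ne : ∀ a : ZMod 2, a ≠ 0 → a = 1 := by decide

lemma signZ_zero : signZ 0 = 1 := rfl

lemma signZ_sq : ∀ a : ZMod 2, signZ a * signZ a = 1 := by decide

lemma vec_add_add_self {n : ℕ} (v u : Fin n → ZMod 2) : v + u + u = v := by
  rw [add_assoc, show u + u = 0 from funext fun i => zmod2_add_self (u i), add_zero]

lemma sum_shift_dot {n : ℕ} (a b w : Fin n → ZMod 2) :
    ∑ i, (a + b) i * w i = (∑ i, a i * w i) + ∑ i, b i * w i := by
  rw [← Finset.sum_add_distrib]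
  exact Finset.sum_congr rfl fun i _ => by simp [Pi.add_apply, add_mul]

lemma sum_signZ_shift_zero {n : ℕ} (C₁ : Submodule (ZMod 2) (Fin n → ZMod 2))
    (E w y₀ : Fin n → ZMod 2) (hy₀ : y₀ ∈ C₁)
    (hz : ∀ i, E i ≠ 0 → y₀ i = 0) (hne : ∑ i, y₀ i * w i ≠ 0) :
    ∑ y ∈ Finset.univ.filter
      (fun y : Fin n → ZMod 2 => y ∈ C₁ ∧ ∀ i, E i ≠ 0 → y i = 0),
      signZ (∑ i, y i * w i) = 0 := by
  classical
  set F := Finset.univ.filter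
      (fun y : Fin n → ZMod 2 => y ∈ C₁ ∧ ∀ i, E i ≠ 0 → y i = 0) with hF
  have hmemF : ∀ a, a ∈ F → a + y₀ ∈ F := by
    intro a ha
    rw [hF, Finset.mem_filter] at ha ⊢
    exact ⟨Finset.mem_univ _, C₁.add_mem ha.2.1 hy₀,
      fun i hi => by rw [Pi.add_apply, ha.2.2 i hi, hz i hi, add_zero]⟩
  have hbij : ∑ y ∈ F, signZ (∑ i, (y + y₀) i * w i)
      = ∑ y ∈ F, signZ (∑ i, y i * w i) :=
    Finset.sum_nbij' (fun y => y + y₀) (fun y => y + y₀) hmemF hmemF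
      (fun a _ => vec_add_add_self a y₀) (fun a _ => vec_add_add_self a y₀)
      (fun a _ => rfl)
  have hpt : ∀ y : Fin n → ZMod 2,
      signZ (∑ i, (y + y₀) i * w i) = -signZ (∑ i, y i * w i) := by
    intro y
    rw [sum_shift_dot, signZ_add, zmod2_one_of_ne _ hne]
    show signZ _ * (-1) = _
    rw [mul_neg_one]
  rw [Finset.sum_congr rfl (fun y _ => hpt y), Finset.sum_neg_distrib] at hbij
  linarith

lemma expand_dot {n : ℕ} (y c w₁ w₂ : Fin n → ZMod 2) :
    ∑ i, y i * (w₁ + w₂) i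
      = (∑ i, y i * (c + w₁ + w₂) i) + ∑ i, y i * c i := by
  rw [← Finset.sum_add_distrib]
  refine Finset.sum_congr rfl fun i _ => ?_
  have h1 : (c + w₁ + w₂) i = c i + (w₁ + w₂) i := by
    simp [Pi.add_apply, add_assoc]
  rw [h1]
  exact (by decide : ∀ p q r : ZMod 2, p * r = p * (q + r) + p * q)
    (y i) (c i) ((w₁ + w₂) i)

/-- The character sum over the codewords of `C₁` agreeing with `e` on `supp E`
equals `(-1)^(e·(c+w₁+w₂)) · 2^(dim C₁ - wt E)` when some `c ∈ C₁^⊥` satisfies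
`supp (c+w₁+w₂) ⊆ supp E`, and `0` otherwise. -/
theorem charSum_codewords_restricting_to
    {n : ℕ} (C₁ : Submodule (ZMod 2) (Fin n → ZMod 2))
    (E e w₁ w₂ : Fin n → ZMod 2)
    (hsupp : ∀ i, e i ≠ 0 → E i ≠ 0)
    (hd : ∀ v ∈ dualCode C₁, v ≠ 0 → hammingNorm E < hammingNorm v) :
    (∀ c ∈ dualCode C₁, (∀ i, (c + w₁ + w₂) i ≠ 0 → E i ≠ 0) →
      (∑ x ∈ Finset.univ.filter
          (fun x : Fin n → ZMod 2 => x ∈ C₁ ∧ ∀ i, E i ≠ 0 → x i = e i),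
        signZ (∑ i, x i * (w₁ + w₂) i))
        = signZ (∑ i, e i * (c + w₁ + w₂) i)
            * 2 ^ (Module.finrank (ZMod 2) C₁ - hammingNorm E))
    ∧ ((¬ ∃ c ∈ dualCode C₁, ∀ i, (c + w₁ + w₂) i ≠ 0 → E i ≠ 0) →
      (∑ x ∈ Finset.univ.filter
          (fun x : Fin n → ZMod 2 => x ∈ C₁ ∧ ∀ i, E i ≠ 0 → x i = e i),
        signZ (∑ i, x i * (w₁ + w₂) i)) = 0) := by
  classical
  obtain ⟨x₀, hx₀C, hx₀e⟩ := exists_codeword_agreeing C₁ E e hd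
  set w : Fin n → ZMod 2 := w₁ + w₂ with hw
  set F := Finset.univ.filter
      (fun y : Fin n → ZMod 2 => y ∈ C₁ ∧ ∀ i, E i ≠ 0 → y i = 0) with hF
  set T := Finset.univ.filter
      (fun x : Fin n → ZMod 2 => x ∈ C₁ ∧ ∀ i, E i ≠ 0 → x i = e i) with hT
  have hmemTF : ∀ a, a ∈ T → a + x₀ ∈ F := by
    intro a ha
    rw [hT, Finset.mem_filter] at ha
    rw [hF, Finset.mem_filter]
    exact ⟨Finset.mem_univ _, C₁.add_mem ha.2.1 hx₀C,
      fun i hi => by rw [Pi.add_apply, ha.2.2 i hi, hx₀e i hi, zmod2_add_self]⟩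
  have hmemFT : ∀ a, a ∈ F → a + x₀ ∈ T := by
    intro a ha
    rw [hF, Finset.mem_filter] at ha
    rw [hT, Finset.mem_filter]
    exact ⟨Finset.mem_univ _, C₁.add_mem ha.2.1 hx₀C,
      fun i hi => by rw [Pi.add_apply, ha.2.2 i hi, hx₀e i hi, zero_add]⟩
  have hreindex : ∑ x ∈ T, signZ (∑ i, x i * w i)
      = signZ (∑ i, x₀ i * w i) * ∑ y ∈ F, signZ (∑ i, y i * w i) := by
    rw [Finset.mul_sum]
    refine Finset.sum_nbij' (fun x => x + x₀) (fun y => y + x₀) hmemTF hmemFT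
      (fun a _ => vec_add_add_self a x₀) (fun a _ => vec_add_add_self a x₀)
      (fun a _ => ?_)
    rw [sum_shift_dot, signZ_add]
    calc signZ (∑ i, a i * w i)
        = signZ (∑ i, a i * w i) * 1 := (mul_one _).symm
      _ = signZ (∑ i, a i * w i)
            * (signZ (∑ i, x₀ i * w i) * signZ (∑ i, x₀ i * w i)) := by
          rw [signZ_sq]
      _ = signZ (∑ i, x₀ i * w i)
            * (signZ (∑ i, a i * w i) * signZ (∑ i, x₀ i * w i)) := by ring
  constructor
  · intro c hc hcE
    have hzero : ∀ y, y ∈ C₁ → (∀ i, E i ≠ 0 → y i = 0) → ∑ i, y i * w i = 0 := by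
      intro y hyC hy0
      rw [hw, expand_dot y c w₁ w₂]
      have hA : ∑ i, y i * (c + w₁ + w₂) i = 0 := Finset.sum_eq_zero fun i _ => by
        by_cases hne : (c + w₁ + w₂) i = 0
        · rw [hne, mul_zero]
        · rw [hy0 i (hcE i hne), zero_mul]
      have hB : ∑ i, y i * c i = 0 := by
        rw [← hc y hyC]
        exact Finset.sum_congr rfl fun i _ => mul_comm _ _
      rw [hA, hB, add_zero]
    have hall1 : ∀ y ∈ F, signZ (∑ i, y i * w i) = 1 := by
      intro y hy
      rw [hF, Finset.mem_filter] at hy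
      rw [hzero y hy.2.1 hy.2.2, signZ_zero]
    have hsign : ∑ i, x₀ i * w i = ∑ i, e i * (c + w₁ + w₂) i := by
      rw [hw, expand_dot x₀ c w₁ w₂]
      have hB : ∑ i, x₀ i * c i = 0 := by
        rw [← hc x₀ hx₀C]
        exact Finset.sum_congr rfl fun i _ => mul_comm _ _
      rw [hB, add_zero]
      refine Finset.sum_congr rfl fun i _ => ?_
      by_cases hne : (c + w₁ + w₂) i = 0
      · rw [hne, mul_zero, mul_zero]
      · rw [hx₀e i (hcE i hne)]
    rw [hreindex, Finset.sum_congr rfl hall1, Finset.sum_const, hsign]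
    rw [hF, card_agree_zero C₁ E hd]
    simp
  · intro hnc
    have hy0 : ∃ y₀, (y₀ ∈ C₁ ∧ ∀ i, E i ≠ 0 → y₀ i = 0) ∧ ∑ i, y₀ i * w i ≠ 0 := by
      by_contra hcon
      push_neg at hcon
      apply hnc
      obtain ⟨c, hcd, hcs⟩ := exists_dual_shift C₁ E w
        (fun y hy hz => hcon y ⟨hy, hz⟩)
      refine ⟨c, hcd, fun i hi => hcs i ?_⟩
      have : (c + w₁ + w₂) i = (c + w) i := by
        simp [Pi.add_apply, hw, add_assoc]
      rwa [this] at hi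
    obtain ⟨y₀, ⟨hy₀C, hy₀z⟩, hy₀w⟩ := hy0
    rw [hreindex, hF, sum_signZ_shift_zero C₁ E w y₀ hy₀C hy₀z hy₀w, mul_zero]
end

section
/- Let C be a linear code of length n over F_2 and let w₁, w₂ ∈ F_2^n. If w₁ + w₂ ∈ C^⊥, then the codeword states satisfy c_{w₁} = c_{w₂} (as functions F_2^n → ℂ); and if w₁ + w₂ ∉ C^⊥, then ⟨c_{w₁}, c_{w₂}⟩ = 0, where ⟨f, g⟩ = Σ_{x ∈ F_2^n} conj(f(x))·g(x). -/
open Finset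
open scoped Classical

/-- `(-1)^b` for `b ∈ F₂`, as a complex number. -/
def signC (b : ZMod 2) : ℂ := if b = 0 then 1 else -1

/-- The codeword state `c_w`: `c_w x = 2^(-dim C / 2) · (-1)^(x·w)` for `x ∈ C`,
and `0` otherwise. -/
noncomputable def codewordState {n : ℕ} (C : Submodule (ZMod 2) (Fin n → ZMod 2))
    (w : Fin n → ZMod 2) : (Fin n → ZMod 2) → ℂ := fun x =>
  if x ∈ C then
    (((2 : ℝ) ^ (-(Module.finrank (ZMod 2) C : ℝ) / 2) : ℝ) : ℂ) * signC (∑ i, x i * w i)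
  else 0

lemma signC_conj (b : ZMod 2) : (starRingEnd ℂ) (signC b) = signC b := by
  rcases (by decide : ∀ c : ZMod 2, c = 0 ∨ c = 1) b with rfl | rfl <;> simp [signC]

lemma signC_mul (a b : ZMod 2) : signC a * signC b = signC (a + b) := by
  rcases (by decide : ∀ c : ZMod 2, c = 0 ∨ c = 1) a with rfl | rfl <;> rcases (by decide : ∀ c : ZMod 2, c = 0 ∨ c = 1) b with rfl | rfl <;> simp [signC, show (1 : ZMod 2) + 1 = 0 from rfl]

lemma signC_add_one (a : ZMod 2) : signC (a + 1) = - signC a := by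
  rcases (by decide : ∀ c : ZMod 2, c = 0 ∨ c = 1) a with rfl | rfl <;> simp [signC, show (1 : ZMod 2) + 1 = 0 from rfl]

lemma dot_split {n : ℕ} (x w₁ w₂ : Fin n → ZMod 2) :
    (∑ i, x i * w₁ i) + (∑ i, x i * w₂ i) = ∑ i, x i * (w₁ + w₂) i := by
  simp [Pi.add_apply, mul_add, Finset.sum_add_distrib]

lemma dot_comm {n : ℕ} (x y : Fin n → ZMod 2) :
    (∑ i, x i * y i) = ∑ i, y i * x i := by
  simp [mul_comm]

/-- The character sum over a code vanishes for a vector outside the dual code. -/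
lemma sum_signC_eq_zero {n : ℕ} (C : Submodule (ZMod 2) (Fin n → ZMod 2))
    (v : Fin n → ZMod 2) (hv : v ∉ dualCode C) :
    ∑ x ∈ Finset.univ.filter (· ∈ C), signC (∑ i, x i * v i) = 0 := by
  obtain ⟨c₀, hc₀C, hc₀⟩ : ∃ c₀ ∈ C, (∑ i, v i * c₀ i) ≠ 0 := by
    by_contra h
    push_neg at h
    exact hv h
  have hc₀1 : (∑ i, c₀ i * v i) = 1 := by
    have h1 : ∀ a : ZMod 2, a ≠ 0 → a = 1 := by decide
    rw [dot_comm]; exact h1 _ hc₀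
  set S := ∑ x ∈ Finset.univ.filter (· ∈ C), signC (∑ i, x i * v i) with hS
  have key : S = -S := by
    rw [hS]
    rw [← Finset.sum_neg_distrib]
    apply Finset.sum_nbij' (fun x => x + c₀) (fun x => x + c₀)
    · intro a ha
      simp only [Finset.mem_filter, Finset.mem_univ, true_and] at ha ⊢
      exact C.add_mem ha hc₀C
    · intro a ha
      simp only [Finset.mem_filter, Finset.mem_univ, true_and] at ha ⊢
      exact C.add_mem ha hc₀C
    · intro a _
      funext i
      simp only [Pi.add_apply]
      have : ∀ b c : ZMod 2, b + c + c = b := by decide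
      exact this _ _
    · intro a _
      funext i
      simp only [Pi.add_apply]
      have : ∀ b c : ZMod 2, b + c + c = b := by decide
      exact this _ _
    · intro a _
      have : (∑ i, (a + c₀) i * v i) = (∑ i, a i * v i) + 1 := by
        rw [← hc₀1]
        simp [Pi.add_apply, add_mul, Finset.sum_add_distrib]
      rw [this, signC_add_one, neg_neg]
  have : S + S = 0 := by linear_combination key
  have h2 : (2 : ℂ) * S = 0 := by ring_nf; linear_combination this
  have := mul_eq_zero.mp h2
  rcases this with h | h
  · norm_num at h
  · exact h

/-- If `w₁ + w₂ ∈ C^⊥` then `c_{w₁} = c_{w₂}`; if `w₁ + w₂ ∉ C^⊥` then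
`⟨c_{w₁}, c_{w₂}⟩ = 0`. -/
theorem codewordState_eq_or_orthogonal
    {n : ℕ} (C : Submodule (ZMod 2) (Fin n → ZMod 2))
    (w₁ w₂ : Fin n → ZMod 2) :
    (w₁ + w₂ ∈ dualCode C → codewordState C w₁ = codewordState C w₂)
    ∧ (w₁ + w₂ ∉ dualCode C →
        (∑ x : Fin n → ZMod 2,
          (starRingEnd ℂ) (codewordState C w₁ x) * codewordState C w₂ x) = 0) := by
  constructor
  · intro h
    funext x
    unfold codewordState
    by_cases hx : x ∈ C
    · simp only [hx, if_true]
      have h0 : (∑ i, x i * (w₁ + w₂) i) = 0 := by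
        rw [dot_comm]; exact h x hx
      have hsum := dot_split x w₁ w₂
      rw [h0] at hsum
      have heq : (∑ i, x i * w₁ i) = ∑ i, x i * w₂ i := by
        revert hsum
        generalize (∑ i, x i * w₁ i) = a
        generalize (∑ i, x i * w₂ i) = b
        revert a b; decide
      rw [heq]
    · simp [hx]
  · intro h
    have : ∀ x : Fin n → ZMod 2,
        (starRingEnd ℂ) (codewordState C w₁ x) * codewordState C w₂ x =
        if x ∈ C then
          (((2 : ℝ) ^ (-(Module.finrank (ZMod 2) C : ℝ) / 2) : ℝ) : ℂ)^2
            * signC (∑ i, x i * (w₁ + w₂) i)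
        else 0 := by
      intro x
      unfold codewordState
      by_cases hx : x ∈ C
      · simp only [hx, if_true, map_mul, signC_conj, Complex.conj_ofReal]
        rw [← dot_split, ← signC_mul]
        ring
      · simp [hx]
    simp only [this]
    rw [← Finset.sum_filter, ← Finset.mul_sum,
      sum_signC_eq_zero C (w₁ + w₂) h, mul_zero]
end

section
/- Let C₂ ⊆ C₁ ⊆ F_2^n be linear codes. The ℂ-dimension of the linear span of the set of codeword states {c_w : w ∈ C₂^⊥} (codeword states defined with respect to C₁, inside the space of functions F_2^n → ℂ) equals 2^(dim(C₁) − dim(C₂)). -/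
open Finset
open scoped Classical

namespace CW

variable {n : ℕ}

lemma zmod2_cases : ∀ b : ZMod 2, b = 0 ∨ b = 1 := by decide

lemma zmod2_add_eq_sub : ∀ a b : ZMod 2, a + b = a - b := by decide

lemma signC_zero : signC 0 = 1 := rfl

lemma signC_add (a b : ZMod 2) : signC (a + b) = signC a * signC b := by
  rcases zmod2_cases a with ha | ha <;> rcases zmod2_cases b with hb | hb <;>
    subst ha <;> subst hb <;>
    simp [signC, show ((1 : ZMod 2) + 1) = 0 from rfl]

lemma signC_injective : Function.Injective signC := by
  intro a b hab
  rcases zmod2_cases a with ha | ha <;> rcases zmod2_cases b with hb | hb <;>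
    subst ha <;> subst hb <;> simp_all [signC] <;> norm_num at hab

def dotForm (n : ℕ) : LinearMap.BilinForm (ZMod 2) (Fin n → ZMod 2) :=
  LinearMap.mk₂ (ZMod 2) (fun v c => ∑ i, v i * c i)
    (fun a b c => by simp [add_mul, Finset.sum_add_distrib])
    (fun m a c => by simp [Finset.mul_sum, mul_assoc])
    (fun a b c => by simp [mul_add, Finset.sum_add_distrib])
    (fun m a c => by simp [Finset.mul_sum, mul_left_comm])

@[simp] lemma dotForm_apply (v c : Fin n → ZMod 2) :
    dotForm n v c = ∑ i, v i * c i := rfl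

lemma dot_comm (v c : Fin n → ZMod 2) : ∑ i, v i * c i = ∑ i, c i * v i := by
  simp [mul_comm]

lemma dotForm_refl : (dotForm n).IsRefl := by
  intro v c h
  simpa [dot_comm] using h

lemma dotForm_nondeg : (dotForm n).Nondegenerate := by
  refine LinearMap.BilinForm.Nondegenerate.ofSeparatingLeft ?_
  intro v hv
  funext i
  have := hv (Pi.single i 1)
  simpa [Pi.single_apply, mul_ite, Finset.sum_ite_eq'] using this

lemma mem_dualCode {C : Submodule (ZMod 2) (Fin n → ZMod 2)} {v : Fin n → ZMod 2} :
    v ∈ dualCode C ↔ ∀ c ∈ C, ∑ i, v i * c i = 0 := Iff.rfl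

lemma dualCode_eq_orthogonal (C : Submodule (ZMod 2) (Fin n → ZMod 2)) :
    dualCode C = (dotForm n).orthogonal C := by
  ext v
  constructor
  · intro hv c hc
    have := hv c hc
    simpa [LinearMap.BilinForm.IsOrtho, dot_comm] using this
  · intro hv c hc
    have := hv c hc
    simpa [LinearMap.BilinForm.IsOrtho, dot_comm] using this

lemma finrank_dualCode (C : Submodule (ZMod 2) (Fin n → ZMod 2)) :
    Module.finrank (ZMod 2) (dualCode C) = n - Module.finrank (ZMod 2) C := by
  rw [dualCode_eq_orthogonal,
    LinearMap.BilinForm.finrank_orthogonal dotForm_nondeg]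
  congr 1
  simp [Module.finrank_pi]

lemma dot_sub (x v w : Fin n → ZMod 2) :
    (∑ i, x i * v i) - ∑ i, x i * w i = ∑ i, x i * (v - w) i := by
  simp [mul_sub, Finset.sum_sub_distrib]

lemma coef_ne_zero (C : Submodule (ZMod 2) (Fin n → ZMod 2)) :
    (((2 : ℝ) ^ (-(Module.finrank (ZMod 2) C : ℝ) / 2) : ℝ) : ℂ) ≠ 0 := by
  simp only [ne_eq, Complex.ofReal_eq_zero]
  positivity

lemma codewordState_eq_iff (C : Submodule (ZMod 2) (Fin n → ZMod 2))
    (w w' : Fin n → ZMod 2) :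
    codewordState C w = codewordState C w' ↔ w - w' ∈ dualCode C := by
  constructor
  · intro heq
    intro c hc
    have hx := congrFun heq c
    simp only [codewordState, if_pos hc] at hx
    have h2 := mul_left_cancel₀ (coef_ne_zero C) hx
    have h3 : (∑ i, c i * w i) = ∑ i, c i * w' i := signC_injective h2
    have h4 : (∑ i, c i * (w - w') i) = 0 := by
      rw [← dot_sub, h3, sub_self]
    rw [← h4]
    exact Finset.sum_congr rfl fun i _ => mul_comm _ _
  · intro hm
    funext x
    by_cases hx : x ∈ C
    · simp only [codewordState, if_pos hx]
      congr 1
      have h4 : (∑ i, x i * (w - w') i) = 0 := by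
        have := hm x hx
        rw [← this]
        exact Finset.sum_congr rfl fun i _ => mul_comm _ _
      have := dot_sub x w w'
      rw [h4] at this
      have : (∑ i, x i * w i) = ∑ i, x i * w' i := by
        have := sub_eq_zero.mp this
        exact this
      rw [this]
    · simp [codewordState, hx]

lemma char_sum_mem (C : Submodule (ZMod 2) (Fin n → ZMod 2)) {u : Fin n → ZMod 2}
    (hu : u ∈ dualCode C) :
    ∑ x ∈ univ.filter (· ∈ C), signC (∑ i, x i * u i)
      = ((univ.filter (· ∈ C) : Finset (Fin n → ZMod 2)).card : ℂ) := by
  rw [Finset.sum_congr rfl (fun x hx => ?_), Finset.sum_const, nsmul_eq_mul, mul_one]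
  have hxC : x ∈ C := (Finset.mem_filter.mp hx).2
  have h0 : (∑ i, x i * u i) = 0 := by
    have := hu x hxC
    rw [← this]
    exact Finset.sum_congr rfl fun i _ => mul_comm _ _
  rw [h0, signC_zero]

lemma char_sum_not_mem (C : Submodule (ZMod 2) (Fin n → ZMod 2)) {u : Fin n → ZMod 2}
    (hu : u ∉ dualCode C) :
    ∑ x ∈ univ.filter (· ∈ C), signC (∑ i, x i * u i) = 0 := by
  simp only [mem_dualCode, not_forall] at hu
  obtain ⟨x₀, hx₀, hne⟩ := hu
  have h1 : (∑ i, x₀ i * u i) = 1 := by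
    have : (∑ i, u i * x₀ i) = ∑ i, x₀ i * u i :=
      Finset.sum_congr rfl fun i _ => mul_comm _ _
    rw [this] at hne
    rcases zmod2_cases (∑ i, x₀ i * u i) with h | h
    · exact absurd h hne
    · exact h
  set S := ∑ x ∈ univ.filter (· ∈ C), signC (∑ i, x i * u i) with hS
  have key : S = -S := by
    rw [hS]
    have := Finset.sum_equiv (Equiv.addRight x₀)
      (s := univ.filter (· ∈ C)) (t := univ.filter (· ∈ C))
      (f := fun x => signC (∑ i, x i * u i))
      (g := fun x => -signC (∑ i, x i * u i)) ?_ ?_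
    · simpa using this
    · intro x
      simp only [Finset.mem_filter, Finset.mem_univ, true_and, Equiv.coe_addRight]
      constructor
      · intro hx; exact C.add_mem hx hx₀
      · intro hx
        have := C.sub_mem hx hx₀
        simpa using this
    · intro x hx
      simp only [Equiv.coe_addRight]
      have hsum : (∑ i, (x + x₀) i * u i) = (∑ i, x i * u i) + ∑ i, x₀ i * u i := by
        simp [add_mul, Finset.sum_add_distrib]
      rw [hsum, h1, signC_add]
      simp [signC]
  have h2 : S + S = 0 := by linear_combination key
  exact add_self_eq_zero.mp h2

lemma pair_eq (C : Submodule (ZMod 2) (Fin n → ZMod 2)) (w w' : Fin n → ZMod 2) :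
    ∑ x : Fin n → ZMod 2, codewordState C w x * codewordState C w' x
      = if w - w' ∈ dualCode C then
          ((univ.filter (· ∈ C) : Finset (Fin n → ZMod 2)).card : ℂ) *
            ((((2 : ℝ) ^ (-(Module.finrank (ZMod 2) C : ℝ) / 2) : ℝ) : ℂ))^2
        else 0 := by
  set c : ℂ := (((2 : ℝ) ^ (-(Module.finrank (ZMod 2) C : ℝ) / 2) : ℝ) : ℂ) with hc
  have step : ∀ x : Fin n → ZMod 2, codewordState C w x * codewordState C w' x
      = if x ∈ C then c^2 * signC (∑ i, x i * (w - w') i) else 0 := by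
    intro x
    by_cases hx : x ∈ C
    · simp only [codewordState, if_pos hx, ← hc]
      have : signC (∑ i, x i * w i) * signC (∑ i, x i * w' i)
          = signC (∑ i, x i * (w - w') i) := by
        rw [← signC_add]
        congr 1
        rw [zmod2_add_eq_sub, dot_sub]
      rw [← this]; ring
    · simp [codewordState, hx]
  calc ∑ x : Fin n → ZMod 2, codewordState C w x * codewordState C w' x
      = ∑ x : Fin n → ZMod 2,
          (if x ∈ C then c^2 * signC (∑ i, x i * (w - w') i) else 0) :=
        Finset.sum_congr rfl fun x _ => step x
    _ = ∑ x ∈ univ.filter (· ∈ C), c^2 * signC (∑ i, x i * (w - w') i) := by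
        rw [Finset.sum_filter]
    _ = c^2 * ∑ x ∈ univ.filter (· ∈ C), signC (∑ i, x i * (w - w') i) := by
        rw [Finset.mul_sum]
    _ = _ := by
        by_cases hd : w - w' ∈ dualCode C
        · rw [if_pos hd, char_sum_mem C hd]; ring
        · rw [if_neg hd, char_sum_not_mem C hd, mul_zero]

end CW

set_option synthInstance.maxHeartbeats 1000000 in
set_option maxHeartbeats 2000000 in
/-- The quantum code `Q_{C₁,C₂}`, the span of `{c_w : w ∈ C₂^⊥}`, has dimension
`2 ^ (dim C₁ - dim C₂)`. -/
theorem finrank_span_codewordStates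
    {n : ℕ} (C₁ C₂ : Submodule (ZMod 2) (Fin n → ZMod 2)) (h : C₂ ≤ C₁) :
    Module.finrank ℂ
        (Submodule.span ℂ
          {f : (Fin n → ZMod 2) → ℂ | ∃ w ∈ dualCode C₂, f = codewordState C₁ w})
      = 2 ^ (Module.finrank (ZMod 2) C₁ - Module.finrank (ZMod 2) C₂) := by
  classical
  have hD : dualCode C₁ ≤ dualCode C₂ := fun v hv c hc => hv c (h hc)
  set D₁ := dualCode C₁ with hD₁
  set D₂ := dualCode C₂ with hD₂
  set K : Submodule (ZMod 2) D₂ := D₁.comap D₂.subtype with hK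
  letI : Fintype (D₂ ⧸ K) := Fintype.ofFinite _
  set r : (D₂ ⧸ K) → (Fin n → ZMod 2) :=
    fun q => ((Quotient.out q : D₂) : Fin n → ZMod 2) with hr
  set g : (D₂ ⧸ K) → ((Fin n → ZMod 2) → ℂ) :=
    fun q => codewordState C₁ (r q) with hg
  have hmkout : ∀ q : D₂ ⧸ K, Submodule.Quotient.mk (Quotient.out q) = q :=
    fun q => Quotient.out_eq q
  have hgmk : ∀ w : D₂,
      g (Submodule.Quotient.mk w) = codewordState C₁ (w : Fin n → ZMod 2) := by
    intro w
    apply (CW.codewordState_eq_iff C₁ _ _).mpr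
    have hq : (Submodule.Quotient.mk (Quotient.out (Submodule.Quotient.mk w : D₂ ⧸ K)))
        = (Submodule.Quotient.mk w : D₂ ⧸ K) := hmkout _
    have hmem := (Submodule.Quotient.eq K).mp hq
    simpa [hK, Submodule.mem_comap] using hmem
  have hcond : ∀ q q' : D₂ ⧸ K, (r q - r q' ∈ D₁) ↔ q = q' := by
    intro q q'
    constructor
    · intro hd
      have hk : (Quotient.out q - Quotient.out q' : D₂) ∈ K := by
        simpa [hK, Submodule.mem_comap] using hd
      have := (Submodule.Quotient.eq K).mpr hk
      rwa [hmkout, hmkout] at this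
    · rintro rfl
      simp [D₁.zero_mem]
  have hNpos : (0:ℕ) < (univ.filter (· ∈ C₁) : Finset (Fin n → ZMod 2)).card :=
    Finset.card_pos.mpr ⟨0, by simp [C₁.zero_mem]⟩
  have hval : (((univ.filter (· ∈ C₁) : Finset (Fin n → ZMod 2)).card : ℂ) *
      ((((2 : ℝ) ^ (-(Module.finrank (ZMod 2) C₁ : ℝ) / 2) : ℝ)) : ℂ)^2) ≠ 0 :=
    mul_ne_zero (Nat.cast_ne_zero.mpr hNpos.ne') (pow_ne_zero _ (CW.coef_ne_zero C₁))
  have hli : LinearIndependent ℂ g := by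
    rw [Fintype.linearIndependent_iff]
    intro l hl q₀
    have hsum : ∑ x : Fin n → ZMod 2, (∑ q, l q • g q) x * g q₀ x = 0 := by
      rw [hl]; simp
    have hexp : ∑ x : Fin n → ZMod 2, (∑ q, l q • g q) x * g q₀ x
        = ∑ q, l q * ∑ x : Fin n → ZMod 2, g q x * g q₀ x := by
      simp only [Finset.sum_apply, Pi.smul_apply, smul_eq_mul, Finset.sum_mul]
      rw [Finset.sum_comm]
      simp only [mul_assoc, ← Finset.mul_sum]
    rw [hexp] at hsum
    have hterm : ∀ q : D₂ ⧸ K, (∑ x : Fin n → ZMod 2, g q x * g q₀ x)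
        = if q = q₀ then (((univ.filter (· ∈ C₁) : Finset (Fin n → ZMod 2)).card : ℂ) *
            ((((2 : ℝ) ^ (-(Module.finrank (ZMod 2) C₁ : ℝ) / 2) : ℝ)) : ℂ)^2) else 0 := by
      intro q
      rw [hg]
      rw [CW.pair_eq C₁ (r q) (r q₀)]
      by_cases hq : q = q₀
      · rw [if_pos ((hcond q q₀).mpr hq), if_pos hq]
      · rw [if_neg (fun hd => hq ((hcond q q₀).mp hd)), if_neg hq]
    rw [Finset.sum_congr rfl (fun q _ => by rw [hterm q])] at hsum
    simp only [mul_ite, mul_zero, Finset.sum_ite_eq', Finset.mem_univ, if_true] at hsum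
    rcases mul_eq_zero.mp hsum with h0 | h0
    · exact h0
    · exact absurd h0 hval
  have hrange : {f : (Fin n → ZMod 2) → ℂ | ∃ w ∈ dualCode C₂, f = codewordState C₁ w}
      = Set.range g := by
    ext f
    constructor
    · rintro ⟨w, hw, rfl⟩
      exact ⟨Submodule.Quotient.mk (⟨w, hw⟩ : D₂), hgmk ⟨w, hw⟩⟩
    · rintro ⟨q, rfl⟩
      exact ⟨r q, (Quotient.out q : D₂).2, rfl⟩
  rw [hrange, finrank_span_eq_card hli]
  have hcardQ : Fintype.card (D₂ ⧸ K) = 2 ^ Module.finrank (ZMod 2) (D₂ ⧸ K) := by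
    have := Module.card_eq_pow_finrank (K := ZMod 2) (V := D₂ ⧸ K)
    rwa [ZMod.card] at this
  have hfK : Module.finrank (ZMod 2) K = Module.finrank (ZMod 2) D₁ :=
    (Submodule.comapSubtypeEquivOfLe hD).finrank_eq
  have hq := Submodule.finrank_quotient_add_finrank K
  have hDd1 : Module.finrank (ZMod 2) D₁ = n - Module.finrank (ZMod 2) C₁ :=
    CW.finrank_dualCode C₁
  have hDd2 : Module.finrank (ZMod 2) D₂ = n - Module.finrank (ZMod 2) C₂ :=
    CW.finrank_dualCode C₂
  have hk12 : Module.finrank (ZMod 2) C₂ ≤ Module.finrank (ZMod 2) C₁ :=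
    Submodule.finrank_mono h
  have hk1n : Module.finrank (ZMod 2) C₁ ≤ n := by
    have := Submodule.finrank_le C₁
    simpa [Module.finrank_pi] using this
  rw [hcardQ]
  congr 1
  omega
end

section
/- Let C be a linear code of length n over F_2 and w ∈ F_2^n. Applying the n-qubit Hadamard transform Ĥ (defined by (Ĥf)(y) = 2^(−n/2) Σ_{x ∈ F_2^n} (−1)^(x·y) f(x)) to the codeword state c_w yields the state s_w defined by s_w(y) = 2^((dim(C) − n)/2) if y ∈ w + C^⊥ and s_w(y) = 0 otherwise. That is, Ĥ c_w = s_w. -/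
open Finset
open scoped Classical

lemma signC_add (a b : ZMod 2) : signC (a + b) = signC a * signC b := by
  unfold signC
  rcases (by decide : ∀ a : ZMod 2, a = 0 ∨ a = 1) a with rfl | rfl <;>
  rcases (by decide : ∀ a : ZMod 2, a = 0 ∨ a = 1) b with rfl | rfl <;>
    simp [(by decide : (1 : ZMod 2) + 1 = 0), (by decide : (1 : ZMod 2) ≠ 0)]

lemma signC_one : signC 1 = -1 := by norm_num [signC]

lemma signC_zero : signC 0 = 1 := by norm_num [signC]

/-- The `n`-qubit Hadamard transform:
`(Ĥ f) y = 2^(-n/2) ∑_x (-1)^(x·y) f x`. -/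
noncomputable def hadamard {n : ℕ} (f : (Fin n → ZMod 2) → ℂ) :
    (Fin n → ZMod 2) → ℂ := fun y =>
  (((2 : ℝ) ^ (-(n : ℝ) / 2) : ℝ) : ℂ) *
    ∑ x : Fin n → ZMod 2, signC (∑ i, x i * y i) * f x

/-- Character sum over a code. -/
lemma char_sum {n : ℕ} (C : Submodule (ZMod 2) (Fin n → ZMod 2)) (v : Fin n → ZMod 2) :
    ∑ x : C, signC (∑ i, (x : Fin n → ZMod 2) i * v i)
      = if v ∈ dualCode C then (Fintype.card C : ℂ) else 0 := by
  split_ifs with hv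
  · have h1 : ∀ x : C, signC (∑ i, (x : Fin n → ZMod 2) i * v i) = 1 := by
      intro x
      have h := hv x x.2
      rw [show (∑ i, (x : Fin n → ZMod 2) i * v i) = ∑ i, v i * (x : Fin n → ZMod 2) i from
        Finset.sum_congr rfl fun i _ => mul_comm _ _, h, signC_zero]
    simp [h1]
  · simp only [dualCode, Submodule.mem_mk, AddSubmonoid.mem_mk, AddSubsemigroup.mem_mk,
      Set.mem_setOf_eq, not_forall] at hv
    obtain ⟨c, hc, hcv⟩ := hv
    have hone : ∀ a : ZMod 2, a ≠ 0 → a = 1 := by decide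
    have hcv1 : ∑ i, c i * v i = 1 := by
      rw [show (∑ i, c i * v i) = ∑ i, v i * c i from
        Finset.sum_congr rfl fun i _ => mul_comm _ _]
      exact hone _ hcv
    set F : C → ℂ := fun x => signC (∑ i, (x : Fin n → ZMod 2) i * v i) with hF
    have hFadd : ∀ x : C, F ((⟨c, hc⟩ : C) + x) = -F x := by
      intro x
      have h2 : (∑ i, (((⟨c, hc⟩ : C) + x : C) : Fin n → ZMod 2) i * v i)
          = (∑ i, (x : Fin n → ZMod 2) i * v i) + 1 := by
        rw [← hcv1, ← Finset.sum_add_distrib]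
        refine Finset.sum_congr rfl fun i _ => ?_
        simp only [Submodule.coe_add, Pi.add_apply]
        ring
      simp only [hF, h2, signC_add, signC_one, mul_neg_one]
    have key : ∑ x : C, F x = -∑ x : C, F x := by
      conv_lhs => rw [← Equiv.sum_comp (Equiv.addLeft (⟨c, hc⟩ : C)) F]
      simp only [Equiv.coe_addLeft, hFadd]
      exact Finset.sum_neg_distrib (f := F)
    linear_combination (1/2 : ℂ) * key

/-- Applying the Hadamard transform to `c_w` yields the state `s_w`, supported
on the coset `w + C^⊥` with constant amplitude `2^((dim C - n)/2)`. -/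
theorem hadamard_codewordState
    {n : ℕ} (C : Submodule (ZMod 2) (Fin n → ZMod 2)) (w : Fin n → ZMod 2) :
    hadamard (codewordState C w)
      = fun y => if ∃ u ∈ dualCode C, y = w + u then
          (((2 : ℝ) ^ (((Module.finrank (ZMod 2) C : ℝ) - n) / 2) : ℝ) : ℂ)
        else 0 := by
  funext y
  set k := Module.finrank (ZMod 2) C with hk
  set Ck : ℂ := (((2 : ℝ) ^ (-(k : ℝ) / 2) : ℝ) : ℂ) with hCk
  have htwo : ∀ a : ZMod 2, a + a = 0 := by decide
  have hcond : (∃ u ∈ dualCode C, y = w + u) ↔ y + w ∈ dualCode C := by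
    constructor
    · rintro ⟨u, hu, rfl⟩
      have : w + u + w = u := by
        funext i
        simp only [Pi.add_apply]
        linear_combination htwo (w i)
      rwa [this]
    · intro h
      refine ⟨y + w, h, ?_⟩
      funext i
      simp only [Pi.add_apply]
      linear_combination (-1 : ZMod 2) * htwo (w i)
  have hsum : ∑ x : Fin n → ZMod 2, signC (∑ i, x i * y i) *
      (if x ∈ C then Ck * signC (∑ i, x i * w i) else 0)
      = Ck * (if y + w ∈ dualCode C then (Fintype.card C : ℂ) else 0) := by
    calc
      _ = ∑ x : Fin n → ZMod 2,
            (if x ∈ C then Ck * signC (∑ i, x i * (y + w) i) else 0) := by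
        refine Finset.sum_congr rfl fun x _ => ?_
        split_ifs with hx
        · have h3 : (∑ i, x i * (y + w) i)
              = (∑ i, x i * y i) + (∑ i, x i * w i) := by
            rw [← Finset.sum_add_distrib]
            exact Finset.sum_congr rfl fun i _ => by simp [Pi.add_apply, mul_add]
          rw [h3, signC_add]; ring
        · simp
      _ = ∑ x ∈ Finset.univ.filter (· ∈ C),
            Ck * signC (∑ i, x i * (y + w) i) := by
        rw [Finset.sum_filter]
      _ = ∑ x : C, Ck * signC (∑ i, (x : Fin n → ZMod 2) i * (y + w) i) := by
        exact Finset.sum_subtype _ (by simp) _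
      _ = Ck * ∑ x : C, signC (∑ i, (x : Fin n → ZMod 2) i * (y + w) i) := by
        rw [Finset.mul_sum]
      _ = _ := by rw [char_sum]
  simp only [hadamard, codewordState, ← hCk, ← hk, hsum, hcond]
  split_ifs with h
  · have hcard : (Fintype.card C : ℝ) = (2 : ℝ) ^ (k : ℝ) := by
      rw [Module.card_eq_pow_finrank (K := ZMod 2) (V := C), ZMod.card, ← hk]
      push_cast
      rw [Real.rpow_natCast]
    have hreal : (2 : ℝ) ^ (-(n : ℝ) / 2) * ((2 : ℝ) ^ (-(k : ℝ) / 2) * (Fintype.card C : ℝ))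
        = (2 : ℝ) ^ (((k : ℝ) - n) / 2) := by
      rw [hcard, ← Real.rpow_add (by norm_num), ← Real.rpow_add (by norm_num)]
      ring_nf
    push_cast [← hreal]
    ring
  · ring
end

section
/- Let C₂ ⊆ C₁ ⊆ F_2^n be linear codes, let t be a natural number with the minimum distance of C₂^⊥ greater than 2t, and let u ∈ F_2^n. If w₁, w₂ ∈ C₂^⊥ and there exist c₁, c₂ ∈ C₁^⊥ with wt(w₁ + u + c₁) ≤ t and wt(w₂ + u + c₂) ≤ t, then w₁ + w₂ ∈ C₁^⊥. (Each corrupted phase pattern u can arise from at most one coset of C₁^⊥ in C₂^⊥, so phase-error decoding is unique.) -/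
open Finset

/-- Each corrupted phase pattern `u` can arise from at most one coset of `C₁^⊥`
in `C₂^⊥`, so phase-error decoding is unique. -/
theorem phase_decoding_unique
    {n t : ℕ} (C₁ C₂ : Submodule (ZMod 2) (Fin n → ZMod 2)) (h : C₂ ≤ C₁)
    (hd : ∀ v ∈ dualCode C₂, v ≠ 0 → 2 * t < hammingNorm v)
    (u w₁ w₂ : Fin n → ZMod 2)
    (hw₁ : w₁ ∈ dualCode C₂) (hw₂ : w₂ ∈ dualCode C₂)
    (hc₁ : ∃ c₁ ∈ dualCode C₁, hammingNorm (w₁ + u + c₁) ≤ t)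
    (hc₂ : ∃ c₂ ∈ dualCode C₁, hammingNorm (w₂ + u + c₂) ≤ t) :
    w₁ + w₂ ∈ dualCode C₁ := by
  obtain ⟨c₁, hc₁m, hc₁t⟩ := hc₁
  obtain ⟨c₂, hc₂m, hc₂t⟩ := hc₂
  have hsub : dualCode C₁ ≤ dualCode C₂ := fun v hv c hc => hv c (h hc)
  set v := w₁ + w₂ + (c₁ + c₂) with hv
  have hvm : v ∈ dualCode C₂ :=
    (dualCode C₂).add_mem ((dualCode C₂).add_mem hw₁ hw₂)
      (hsub ((dualCode C₁).add_mem hc₁m hc₂m))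
  have heq : v = (w₁ + u + c₁) + (w₂ + u + c₂) := by
    rw [hv]; ext i
    simp only [Pi.add_apply]
    ring_nf
    rw [show (2 : ZMod 2) = 0 by decide]
    ring
  have hle : hammingNorm v ≤ 2 * t := by
    rw [heq]
    calc hammingNorm ((w₁ + u + c₁) + (w₂ + u + c₂))
        ≤ hammingNorm (w₁ + u + c₁) + hammingNorm (w₂ + u + c₂) := by
          have := hammingDist_triangle ((w₁ + u + c₁) + (w₂ + u + c₂)) (w₂ + u + c₂) 0
          rw [hammingDist_zero_right, hammingDist_zero_right, hammingDist_eq_hammingNorm,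
            neg_add, neg_add_cancel_right,
            show -(w₁ + u + c₁) = w₁ + u + c₁ by ext i; simp [CharTwo.neg_eq]] at this
          exact this
      _ ≤ 2 * t := by omega
  have hv0 : v = 0 := by
    by_contra hne
    exact absurd hle (not_le.mpr (hd v hvm hne))
  have : w₁ + w₂ = c₁ + c₂ := by
    have := hv0
    rw [hv] at this
    have h2 : w₁ + w₂ = -(c₁ + c₂) := by linear_combination this
    rw [h2]; ext i; simp [CharTwo.neg_eq]
  rw [this]
  exact (dualCode C₁).add_mem hc₁m hc₂m
end

section
/- Let φ be a nonempty finite family of k-dimensional linear subspaces of F_2^n such that every nonzero vector of F_2^n belongs to exactly W members of φ, and let d ≥ 1. If W · Σ_{j=1}^{d−1} (n choose j) < |φ|, then there exists a code C ∈ φ whose minimum distance is at least d. -/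
open Finset
open scoped Classical

lemma zmod2_eq_of_ne_zero_iff : ∀ a b : ZMod 2, (a ≠ 0 ↔ b ≠ 0) → a = b := by decide

lemma card_hammingNorm_eq_le (n j : ℕ) :
    ((univ : Finset (Fin n → ZMod 2)).filter (fun v => hammingNorm v = j)).card
      ≤ n.choose j := by
  classical
  have := Finset.card_le_card_of_injOn
    (f := fun v : Fin n → ZMod 2 => univ.filter (fun i => v i ≠ 0))
    (s := (univ : Finset (Fin n → ZMod 2)).filter (fun v => hammingNorm v = j))
    (t := (univ : Finset (Fin n)).powersetCard j)
    (by
      intro v hv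
      simp only [Finset.mem_coe, Finset.mem_filter] at hv
      simp only [Finset.mem_coe, Finset.mem_powersetCard]
      exact ⟨Finset.subset_univ _, hv.2⟩)
    (by
      intro v hv w hw h
      have h' : univ.filter (fun i => v i ≠ 0) = univ.filter (fun i => w i ≠ 0) := h
      funext i
      apply zmod2_eq_of_ne_zero_iff
      constructor
      · intro hvi
        have : i ∈ univ.filter (fun i => v i ≠ 0) := by simpa using hvi
        rw [h'] at this
        simpa using this
      · intro hwi
        have : i ∈ univ.filter (fun i => w i ≠ 0) := by simpa using hwi
        rw [← h'] at this
        simpa using this)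
  simpa [Finset.card_powersetCard] using this

/-- The greedy Gilbert–Varshamov argument: if every nonzero vector of `F₂ⁿ`
lies in exactly `W` members of a nonempty family `φ` of `k`-dimensional
subspaces and `W · Σ_{j=1}^{d-1} (n choose j) < |φ|`, then some code in `φ`
has minimum distance at least `d`. -/
theorem exists_code_with_min_distance
    {n k W d : ℕ} (φ : Finset (Submodule (ZMod 2) (Fin n → ZMod 2)))
    (hne : φ.Nonempty)
    (hdim : ∀ C ∈ φ, Module.finrank (ZMod 2) C = k)
    (hW : ∀ v : Fin n → ZMod 2, v ≠ 0 → (φ.filter (fun C => v ∈ C)).card = W)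
    (hd : 1 ≤ d)
    (hcount : W * ∑ j ∈ Finset.Icc 1 (d - 1), n.choose j < φ.card) :
    ∃ C ∈ φ, ∀ v ∈ C, v ≠ 0 → d ≤ hammingNorm v := by
  classical
  set V : Finset (Fin n → ZMod 2) :=
    univ.filter (fun v => v ≠ 0 ∧ hammingNorm v < d) with hVdef
  have hmemV : ∀ v ∈ V, hammingNorm v ∈ Finset.Icc 1 (d - 1) := by
    intro v hv
    simp only [hVdef, Finset.mem_filter] at hv
    have h1 : hammingNorm v ≠ 0 := by
      intro h
      exact hv.2.1 (hammingNorm_eq_zero.mp h)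
    simp only [Finset.mem_Icc]
    omega
  have hVcard : V.card ≤ ∑ j ∈ Finset.Icc 1 (d - 1), n.choose j := by
    rw [Finset.card_eq_sum_card_fiberwise hmemV]
    apply Finset.sum_le_sum
    intro j _
    calc (V.filter (fun v => hammingNorm v = j)).card
        ≤ ((univ : Finset (Fin n → ZMod 2)).filter
            (fun v => hammingNorm v = j)).card := by
          apply Finset.card_le_card
          intro v hv
          simp only [Finset.mem_filter] at hv ⊢
          exact ⟨Finset.mem_univ _, hv.2⟩
      _ ≤ n.choose j := card_hammingNorm_eq_le n j
  set Bad : Finset (Submodule (ZMod 2) (Fin n → ZMod 2)) :=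
    φ.filter (fun C => ∃ v, v ∈ C ∧ v ≠ 0 ∧ hammingNorm v < d) with hBadDef
  have hBadSub : Bad ⊆ V.biUnion (fun v => φ.filter (fun C => v ∈ C)) := by
    intro C hC
    simp only [hBadDef, Finset.mem_filter] at hC
    obtain ⟨hCφ, v, hvC, hv0, hvd⟩ := hC
    apply Finset.mem_biUnion.mpr
    refine ⟨v, ?_, ?_⟩
    · simp only [hVdef, Finset.mem_filter]
      exact ⟨Finset.mem_univ _, hv0, hvd⟩
    · simp only [Finset.mem_filter]
      exact ⟨hCφ, hvC⟩
  have hBadCard : Bad.card < φ.card := by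
    calc Bad.card ≤ (V.biUnion (fun v => φ.filter (fun C => v ∈ C))).card :=
          Finset.card_le_card hBadSub
      _ ≤ ∑ v ∈ V, (φ.filter (fun C => v ∈ C)).card := Finset.card_biUnion_le
      _ = ∑ v ∈ V, W := by
          apply Finset.sum_congr rfl
          intro v hv
          simp only [hVdef, Finset.mem_filter] at hv
          exact hW v hv.2.1
      _ = V.card * W := by rw [Finset.sum_const, smul_eq_mul]
      _ ≤ (∑ j ∈ Finset.Icc 1 (d - 1), n.choose j) * W :=
          Nat.mul_le_mul_right _ hVcard
      _ = W * ∑ j ∈ Finset.Icc 1 (d - 1), n.choose j := Nat.mul_comm _ _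
      _ < φ.card := hcount
  have : (φ \ Bad).Nonempty := by
    have hsub : Bad ⊆ φ := Finset.filter_subset _ _
    rw [← Finset.card_pos, Finset.card_sdiff_of_subset hsub]
    omega
  obtain ⟨C, hC⟩ := this
  rw [Finset.mem_sdiff] at hC
  refine ⟨C, hC.1, ?_⟩
  intro v hvC hv0
  by_contra hlt
  push_neg at hlt
  exact hC.2 (by
    simp only [hBadDef, Finset.mem_filter]
    exact ⟨hC.1, v, hvC, hv0, hlt⟩)
end

section
/- Let D be a (k+1)-dimensional linear subspace of F_2^n and let u, v ∈ D with u ≠ 0 and v ∉ span{u} (i.e., v ≠ 0 and v ≠ u). Then the number of k-dimensional linear subspaces C of D with u ∈ C and v ∉ C is exactly 2^(k−1). -/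
open Finset

set_option maxHeartbeats 1000000

/-- In a `(k+1)`-dimensional space `D` over `F₂`, given `u ≠ 0` and
`v ∉ span{u}` in `D`, the number of `k`-dimensional subspaces `C ⊆ D` with
`u ∈ C` and `v ∉ C` is exactly `2^(k-1)`. -/
theorem card_hyperplanes_containing_u_avoiding_v
    {n k : ℕ} (D : Submodule (ZMod 2) (Fin n → ZMod 2))
    (hD : Module.finrank (ZMod 2) D = k + 1)
    (u v : Fin n → ZMod 2) (hu : u ∈ D) (hv : v ∈ D)
    (hu0 : u ≠ 0) (hv0 : v ≠ 0) (hvu : v ≠ u) :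
    Nat.card {C : Submodule (ZMod 2) (Fin n → ZMod 2) //
        C ≤ D ∧ Module.finrank (ZMod 2) C = k ∧ u ∈ C ∧ v ∉ C}
      = 2 ^ (k - 1) := by
  classical
  let ub : D := ⟨u, hu⟩
  let vb : D := ⟨v, hv⟩
  have two01 : ∀ a : ZMod 2, a ≠ 0 → a = 1 := by decide
  have twocases : ∀ a : ZMod 2, a = 0 ∨ a = 1 := by decide
  have hub0 : ub ≠ 0 := fun h => hu0 (congrArg Subtype.val h)
  have hvb0 : vb ≠ 0 := fun h => hv0 (congrArg Subtype.val h)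
  have hvbub : vb ≠ ub := fun h => hvu (congrArg Subtype.val h)
  -- v̄ ∉ span ū, ū ∉ span v̄
  have hvspan : vb ∉ Submodule.span (ZMod 2) {ub} := by
    intro h
    rw [Submodule.mem_span_singleton] at h
    obtain ⟨c, hc⟩ := h
    rcases twocases c with rfl | rfl
    · rw [zero_smul] at hc; exact hvb0 hc.symm
    · rw [one_smul] at hc; exact hvbub hc.symm
  have huspan : ub ∉ Submodule.span (ZMod 2) {vb} := by
    intro h
    rw [Submodule.mem_span_singleton] at h
    obtain ⟨c, hc⟩ := h
    rcases twocases c with rfl | rfl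
    · rw [zero_smul] at hc; exact hub0 hc.symm
    · rw [one_smul] at hc; exact hvbub hc
  -- rank of kernels of functionals hitting 1
  have hker_rank : ∀ φ : Module.Dual (ZMod 2) D, φ vb = 1 →
      Module.finrank (ZMod 2) (LinearMap.ker φ) = k := by
    intro φ hφ
    have hsurj : Function.Surjective φ := by
      intro c
      exact ⟨c • vb, by rw [map_smul, hφ, smul_eq_mul, mul_one]⟩
    have h1 := LinearMap.finrank_range_add_finrank_ker φ
    rw [LinearMap.range_eq_top.mpr hsurj, finrank_top, hD] at h1
    simp only [Module.finrank_self] at h1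
    omega
  -- the bijection with functionals
  let T := {φ : Module.Dual (ZMod 2) D // φ ub = 0 ∧ φ vb = 1}
  let F : T → {C : Submodule (ZMod 2) (Fin n → (ZMod 2)) //
      C ≤ D ∧ Module.finrank (ZMod 2) C = k ∧ u ∈ C ∧ v ∉ C} := fun φ =>
    ⟨(LinearMap.ker φ.1).map D.subtype, by
      refine ⟨Submodule.map_subtype_le _ _, ?_, ?_, ?_⟩
      · rw [Submodule.finrank_map_subtype_eq]
        exact hker_rank φ.1 φ.2.2
      · exact ⟨ub, by simpa [LinearMap.mem_ker] using φ.2.1, rfl⟩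
      · intro hmem
        rw [Submodule.mem_map] at hmem
        obtain ⟨x, hx, hxv⟩ := hmem
        have hxe : x = vb := Subtype.ext hxv
        rw [hxe, LinearMap.mem_ker, φ.2.2] at hx
        exact one_ne_zero hx⟩
  have hFbij : Function.Bijective F := by
    constructor
    · rintro ⟨φ, hφu, hφv⟩ ⟨ψ, hψu, hψv⟩ h
      have hker : LinearMap.ker φ = LinearMap.ker ψ :=
        Submodule.map_injective_of_injective D.injective_subtype
          (congrArg Subtype.val h)
      refine Subtype.ext (LinearMap.ext fun x => ?_)
      have hx : x - φ x • vb ∈ LinearMap.ker φ := by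
        rw [LinearMap.mem_ker, map_sub, map_smul, hφv, smul_eq_mul, mul_one, sub_self]
      rw [hker, LinearMap.mem_ker, map_sub, map_smul, hψv, smul_eq_mul, mul_one,
        sub_eq_zero] at hx
      exact hx.symm
    · rintro ⟨C, hCD, hCk, huC, hvC⟩
      set C' : Submodule (ZMod 2) D := C.comap D.subtype with hC'
      have hmapC' : C'.map D.subtype = C := by
        rw [hC', Submodule.map_comap_subtype, inf_eq_right.mpr hCD]
      have hvC' : vb ∉ C' := fun h => hvC (Submodule.mem_comap.mp h)
      obtain ⟨f, hfv, hfmap⟩ :=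
        Submodule.exists_dual_map_eq_bot_of_notMem (p := C') hvC' inferInstance
      have hfv1 : f vb = 1 := two01 _ hfv
      have hfu : f ub = 0 := by
        have : f ub ∈ C'.map f := Submodule.mem_map_of_mem (by exact huC)
        rw [hfmap] at this
        exact this
      have hCle : C' ≤ LinearMap.ker f := by
        intro x hx
        have : f x ∈ C'.map f := Submodule.mem_map_of_mem hx
        rw [hfmap] at this
        exact this
      have hC'k : Module.finrank (ZMod 2) C' = k := by
        have := Submodule.finrank_map_subtype_eq D C'
        rw [hmapC'] at this
        omega
      have hkerC' : LinearMap.ker f = C' := by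
        refine (Submodule.eq_of_le_of_finrank_le hCle ?_).symm
        rw [hker_rank f hfv1, hC'k]
      refine ⟨⟨f, hfu, hfv1⟩, ?_⟩
      apply Subtype.ext
      show (LinearMap.ker f).map D.subtype = C
      rw [hkerC', hmapC']
  have hcard := Nat.card_eq_of_bijective F hFbij
  rw [← hcard]
  -- now count T via kernel of evaluation map
  let E : Module.Dual (ZMod 2) D →ₗ[(ZMod 2)] (ZMod 2) × (ZMod 2) :=
    LinearMap.prod (LinearMap.applyₗ ub) (LinearMap.applyₗ vb)
  have hE : ∀ φ : Module.Dual (ZMod 2) D, E φ = (φ ub, φ vb) := fun _ => rfl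
  -- two special functionals
  obtain ⟨φ₀, hφ₀v, hφ₀map⟩ :=
    Submodule.exists_dual_map_eq_bot_of_notMem (p := Submodule.span (ZMod 2) {ub}) hvspan inferInstance
  have hφ₀v1 : φ₀ vb = 1 := two01 _ hφ₀v
  have hφ₀u : φ₀ ub = 0 := by
    have : φ₀ ub ∈ (Submodule.span (ZMod 2) {ub}).map φ₀ :=
      Submodule.mem_map_of_mem (Submodule.mem_span_singleton_self ub)
    rw [hφ₀map] at this
    exact this
  obtain ⟨ψ₀, hψ₀u, hψ₀map⟩ :=
    Submodule.exists_dual_map_eq_bot_of_notMem (p := Submodule.span (ZMod 2) {vb}) huspan inferInstance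
  have hψ₀u1 : ψ₀ ub = 1 := two01 _ hψ₀u
  have hψ₀v : ψ₀ vb = 0 := by
    have : ψ₀ vb ∈ (Submodule.span (ZMod 2) {vb}).map ψ₀ :=
      Submodule.mem_map_of_mem (Submodule.mem_span_singleton_self vb)
    rw [hψ₀map] at this
    exact this
  -- E is surjective
  have hEsurj : LinearMap.range E = ⊤ := by
    rw [Submodule.eq_top_iff']
    rintro ⟨a, b⟩
    refine ⟨a • ψ₀ + b • φ₀, ?_⟩
    have h1 : E (a • ψ₀ + b • φ₀) = a • E ψ₀ + b • E φ₀ := by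
      rw [map_add, map_smul, map_smul]
    rw [h1, hE, hE, hψ₀u1, hψ₀v, hφ₀u, hφ₀v1, Prod.smul_mk, Prod.smul_mk,
      Prod.mk_add_mk, smul_eq_mul, smul_eq_mul, smul_eq_mul, smul_eq_mul,
      mul_one, mul_zero, mul_zero, mul_one, add_zero, zero_add]
  -- finrank of kernel of E
  have hkerE : Module.finrank (ZMod 2) (LinearMap.ker E) = k - 1 ∧ 1 ≤ k := by
    have h1 := LinearMap.finrank_range_add_finrank_ker E
    rw [hEsurj, finrank_top, Subspace.dual_finrank_eq, hD] at h1
    have h2 : Module.finrank (ZMod 2) ((ZMod 2) × (ZMod 2)) = 2 := by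
      simp [Module.finrank_self]
    rw [h2] at h1
    omega
  -- T is in bijection with ker E
  let e : T ≃ LinearMap.ker E :=
  { toFun := fun φ => ⟨φ.1 - φ₀, by
      rw [LinearMap.mem_ker, map_sub, hE, hE, φ.2.1, φ.2.2, hφ₀u, hφ₀v1, sub_self]⟩
    invFun := fun ψ => ⟨ψ.1 + φ₀, by
      have h := ψ.2
      rw [LinearMap.mem_ker, hE, Prod.ext_iff] at h
      have h1 : (ψ.1 : Module.Dual (ZMod 2) D) ub = 0 := h.1
      have h2 : (ψ.1 : Module.Dual (ZMod 2) D) vb = 0 := h.2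
      constructor
      · rw [LinearMap.add_apply, h1, hφ₀u, add_zero]
      · rw [LinearMap.add_apply, h2, hφ₀v1, zero_add]⟩
    left_inv := fun φ => by ext; simp
    right_inv := fun ψ => by ext; simp }
  rw [Nat.card_eq_of_bijective e e.bijective]
  -- count the kernel
  haveI : Finite (Module.Dual (ZMod 2) D) :=
    Finite.of_injective _ DFunLike.coe_injective
  haveI : Fintype (LinearMap.ker E) := Fintype.ofFinite _
  rw [Nat.card_eq_fintype_card, Module.card_eq_pow_finrank (K := ZMod 2), hkerE.1, ZMod.card]
end
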